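/- arXiv:math/0509374 — 2 statements merged into one kernel-verified Lean document; each statement's English description precedes it below -/
import Mathlib

section
/- Let K be a compact Hausdorff space with no isolated points (a perfect compact space) and let f₁, …, fₙ be continuous linear functionals on C(K). Then the finite-codimensional subspace Y = ∩_{i=1}^{n} ker fᵢ is a C-rich subspace of C(K). -/
open Filter Topology Metric

/-- A closed subspace `X` of `C(K)` is *C-rich* if for every nonempty open `U ⊆ K` and every
`ε > 0` there is a norm-one nonnegative function supported in `U` at distance less than `ε`
from `X`. -/
def IsCRich {K 𝕜 : Type*} [TopologicalSpace K] [CompactSpace K] [T2Space K] [RCLike 𝕜]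
    (X : Submodule 𝕜 C(K, 𝕜)) : Prop :=
  ∀ U : Set K, IsOpen U → U.Nonempty → ∀ ε : ℝ, 0 < ε →
    ∃ h : C(K, 𝕜), ‖h‖ = 1 ∧ (∀ t, 0 ≤ RCLike.re (h t) ∧ RCLike.im (h t) = 0) ∧
      Function.support ⇑h ⊆ U ∧ Metric.infDist h (X : Set C(K, 𝕜)) < ε

/-!
Since `K` has no isolated points, every nonempty open `U` contains arbitrarily many pairwise
disjoint nonempty open sets, and hence `N` disjointly supported norm-one bumps `hₖ`. For a
functional `f` on `C(K)`, choosing unimodular `θₖ` with `θₖ f(hₖ) = |f(hₖ)|` gives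
`∑ₖ |f(hₖ)| = f(∑ₖ θₖ hₖ) ≤ ‖f‖`, so for `N` large some bump has `∑ᵢ |fᵢ(hₖ)| < δ`.
Finally, `Y = ⋂ ker fᵢ` is the kernel of a map into a finite-dimensional space, so a bounded
right inverse on its range gives `dist(h, Y) ≤ C ∑ᵢ |fᵢ(h)|`.
-/

theorem LinearMap.exists_infDist_ker_le {𝕜 E F : Type*} [NontriviallyNormedField 𝕜]
    [CompleteSpace 𝕜] [NormedAddCommGroup E] [NormedSpace 𝕜 E] [NormedAddCommGroup F]
    [NormedSpace 𝕜 F] [FiniteDimensional 𝕜 F] (Φ : E →ₗ[𝕜] F) :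
    ∃ C, 0 ≤ C ∧ ∀ x, infDist x (LinearMap.ker Φ : Set E) ≤ C * ‖Φ x‖ := by
  obtain ⟨S, hS⟩ := Φ.rangeRestrict.exists_rightInverse_of_surjective Φ.range_rangeRestrict
  let S' : LinearMap.range Φ →L[𝕜] E := LinearMap.toContinuousLinearMap S
  refine ⟨‖S'‖, norm_nonneg _, fun x => ?_⟩
  have hΦS : Φ (S' (Φ.rangeRestrict x)) = Φ x :=
    congrArg Subtype.val (LinearMap.congr_fun hS (Φ.rangeRestrict x))
  have hmem : x - S' (Φ.rangeRestrict x) ∈ LinearMap.ker Φ := by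
    rw [LinearMap.mem_ker, map_sub, hΦS, sub_self]
  calc infDist x (LinearMap.ker Φ : Set E)
      ≤ dist x (x - S' (Φ.rangeRestrict x)) := infDist_le_dist_of_mem hmem
    _ = ‖S' (Φ.rangeRestrict x)‖ := by rw [dist_eq_norm, sub_sub_cancel]
    _ ≤ ‖S'‖ * ‖Φ x‖ := S'.le_opNorm _

theorem IsOpen.infinite_of_not_isOpen_singleton {K : Type*} [TopologicalSpace K] [T1Space K]
    (hK : ∀ t : K, ¬ IsOpen ({t} : Set K)) {U : Set K} (hU : IsOpen U) (hne : U.Nonempty) :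
    U.Infinite := by
  obtain ⟨t, ht⟩ := hne
  have : NeBot (𝓝[≠] t) := ⟨fun h => hK t ((isOpen_singleton_iff_punctured_nhds t).2 h)⟩
  exact infinite_of_mem_nhds t (hU.mem_nhds ht)

namespace ContinuousMap

variable {K : Type*} [TopologicalSpace K] [CompactSpace K]

theorem norm_sum_le_of_pairwiseDisjoint_support {E ι : Type*} [NormedAddCommGroup E]
    {s : Finset ι} {h : ι → C(K, E)}
    (hdisj : (s : Set ι).PairwiseDisjoint fun k => Function.support (h k))
    {C : ℝ} (hC : 0 ≤ C) (hh : ∀ k ∈ s, ‖h k‖ ≤ C) : ‖∑ k ∈ s, h k‖ ≤ C := by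
  refine (norm_le _ hC).2 fun t => ?_
  rw [sum_apply]
  by_cases hex : ∃ k ∈ s, h k t ≠ 0
  · obtain ⟨k, hk, hkt⟩ := hex
    rw [Finset.sum_eq_single_of_mem k hk fun j hj hjk => ?_]
    · exact (norm_coe_le_norm _ t).trans (hh k hk)
    · by_contra hjt
      exact Set.disjoint_left.1 (hdisj hj hk hjk) hjt hkt
  · push Not at hex
    rw [Finset.sum_eq_zero hex, norm_zero]
    exact hC

theorem sum_norm_apply_le_opNorm {𝕜 ι : Type*} [RCLike 𝕜] {s : Finset ι} {h : ι → C(K, 𝕜)}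
    (hdisj : (s : Set ι).PairwiseDisjoint fun k => Function.support (h k))
    (hh : ∀ k ∈ s, ‖h k‖ ≤ 1) (f : C(K, 𝕜) →L[𝕜] 𝕜) : ∑ k ∈ s, ‖f (h k)‖ ≤ ‖f‖ := by
  -- `θ k` is `0` rather than unimodular when `f (h k) = 0`, by `x / 0 = 0`.
  let θ : ι → 𝕜 := fun k => starRingEnd 𝕜 (f (h k)) / ‖f (h k)‖
  have hθ : ∀ k, ‖θ k‖ ≤ 1 := fun k => by
    simp only [θ, norm_div, RCLike.norm_conj, RCLike.norm_ofReal, abs_norm]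
    exact div_self_le_one _
  have hθf : ∀ k, θ k * f (h k) = (‖f (h k)‖ : 𝕜) := fun k => by
    rcases eq_or_ne (f (h k)) 0 with hz | hz
    · simp [hz]
    · rw [div_mul_eq_mul_div, RCLike.conj_mul, sq, mul_div_assoc,
        div_self (by simpa using hz), mul_one]
  have hsum : ‖f (∑ k ∈ s, θ k • h k)‖ = ∑ k ∈ s, ‖f (h k)‖ := by
    simp only [map_sum, map_smul, smul_eq_mul, hθf]
    rw [← RCLike.ofReal_sum, RCLike.norm_ofReal, abs_of_nonneg (by positivity)]
  have hdisj' : (s : Set ι).PairwiseDisjoint fun k => Function.support (θ k • h k) :=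
    hdisj.mono fun k => Function.support_const_smul_subset (θ k) (h k)
  have hnorm : ‖∑ k ∈ s, θ k • h k‖ ≤ 1 :=
    norm_sum_le_of_pairwiseDisjoint_support hdisj' zero_le_one fun k hk =>
      (norm_smul_le _ _).trans (mul_le_one₀ (hθ k) (norm_nonneg _) (hh k hk))
  calc ∑ k ∈ s, ‖f (h k)‖ = ‖f (∑ k ∈ s, θ k • h k)‖ := hsum.symm
    _ ≤ ‖f‖ * ‖∑ k ∈ s, θ k • h k‖ := f.le_opNorm _
    _ ≤ ‖f‖ := mul_le_of_le_one_right (norm_nonneg _) hnorm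

theorem exists_norm_eq_one_support_subset [T2Space K] {𝕜 : Type*} [RCLike 𝕜] {U : Set K}
    (hU : IsOpen U) (hne : U.Nonempty) :
    ∃ h : C(K, 𝕜), ‖h‖ = 1 ∧ (∀ t, 0 ≤ RCLike.re (h t) ∧ RCLike.im (h t) = 0) ∧
      Function.support h ⊆ U := by
  obtain ⟨t₀, ht₀⟩ := hne
  obtain ⟨g, hgU, hg₁, hg⟩ := exists_tsupport_one_of_isOpen_isClosed hU
    isClosed_closure.isCompact isClosed_singleton (Set.singleton_subset_iff.2 ht₀)
  let h : C(K, 𝕜) := ⟨fun t => (g t : 𝕜), by fun_prop⟩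
  have hnorm : ∀ t, ‖h t‖ = g t := fun t => by
    simp [h, abs_of_nonneg (hg t).1]
  refine ⟨h, le_antisymm ?_ ?_, fun t => by simp [h, (hg t).1], ?_⟩
  · exact (norm_le _ zero_le_one).2 fun t => (hnorm t).trans_le (hg t).2
  · calc (1 : ℝ) = ‖h t₀‖ := by rw [hnorm, hg₁ rfl, Pi.one_apply]
      _ ≤ ‖h‖ := norm_coe_le_norm h t₀
  · intro t ht
    exact hgU (subset_tsupport g (by simpa [h] using ht))

theorem exists_norm_eq_one_support_subset_sum_norm_apply_lt [T2Space K] {𝕜 ι : Type*} [RCLike 𝕜]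
    [Fintype ι] (hK : ∀ t : K, ¬ IsOpen ({t} : Set K)) {U : Set K} (hU : IsOpen U)
    (hne : U.Nonempty) (f : ι → C(K, 𝕜) →L[𝕜] 𝕜) {δ : ℝ} (hδ : 0 < δ) :
    ∃ h : C(K, 𝕜), ‖h‖ = 1 ∧ (∀ t, 0 ≤ RCLike.re (h t) ∧ RCLike.im (h t) = 0) ∧
      Function.support h ⊆ U ∧ ∑ i, ‖f i h‖ < δ := by
  obtain ⟨N, hN⟩ := exists_nat_gt ((∑ i, ‖f i‖) / δ)
  obtain ⟨s, hsU, hsN⟩ := (hU.infinite_of_not_isOpen_singleton hK hne).exists_subset_card_eq N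
  obtain ⟨W, hW, hWdisj⟩ := s.finite_toSet.t2_separation
  choose! h hh₁ hreal hsupp using fun x (hx : x ∈ s) =>
    exists_norm_eq_one_support_subset (𝕜 := 𝕜) (hU.inter (hW x).2) ⟨x, hsU hx, (hW x).1⟩
  have hdisj : (s : Set K).PairwiseDisjoint fun x => Function.support (h x) :=
    hWdisj.mono_on fun x hx => (hsupp x hx).trans Set.inter_subset_right
  have hsum : ∑ x ∈ s, ∑ i, ‖f i (h x)‖ < ∑ _x ∈ s, δ :=
    calc ∑ x ∈ s, ∑ i, ‖f i (h x)‖ = ∑ i, ∑ x ∈ s, ‖f i (h x)‖ := Finset.sum_comm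
      _ ≤ ∑ i, ‖f i‖ := Finset.sum_le_sum fun i _ =>
          sum_norm_apply_le_opNorm hdisj (fun x hx => (hh₁ x hx).le) (f i)
      _ < N * δ := (div_lt_iff₀ hδ).1 hN
      _ = ∑ _x ∈ s, δ := by simp [hsN]
  obtain ⟨x, hx, hlt⟩ := Finset.exists_lt_of_sum_lt hsum
  exact ⟨h x, hh₁ x hx, hreal x hx, (hsupp x hx).trans Set.inter_subset_left, hlt⟩

end ContinuousMap

/-- If `K` is a perfect compact Hausdorff space (no isolated points), then every finite
intersection of kernels of continuous linear functionals on `C(K)` is a C-rich subspace. -/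
theorem isCRich_iInf_ker_of_perfect {K 𝕜 : Type*} [TopologicalSpace K] [CompactSpace K]
    [T2Space K] [RCLike 𝕜] (hK : ∀ t : K, ¬ IsOpen ({t} : Set K))
    {n : ℕ} (f : Fin n → (C(K, 𝕜) →L[𝕜] 𝕜)) :
    IsCRich (⨅ i : Fin n, LinearMap.ker (f i).toLinearMap) := by
  intro U hU hne ε hε
  let Φ : C(K, 𝕜) →ₗ[𝕜] (Fin n → 𝕜) := LinearMap.pi fun i => (f i).toLinearMap
  obtain ⟨C, hC, hdist⟩ := Φ.exists_infDist_ker_le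
  obtain ⟨h, hh₁, hreal, hsupp, hsmall⟩ :=
    ContinuousMap.exists_norm_eq_one_support_subset_sum_norm_apply_lt hK hU hne f
      (δ := ε / (C + 1)) (by positivity)
  refine ⟨h, hh₁, hreal, hsupp, ?_⟩
  have hΦh : ‖Φ h‖ ≤ ε / (C + 1) := (pi_norm_le_iff_of_nonneg (by positivity)).2 fun i =>
    (Finset.single_le_sum (fun j _ => norm_nonneg (f j h)) (Finset.mem_univ i)).trans hsmall.le
  calc infDist h ((⨅ i, LinearMap.ker (f i).toLinearMap : Submodule 𝕜 C(K, 𝕜)) : Set C(K, 𝕜))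
      = infDist h (LinearMap.ker Φ : Set C(K, 𝕜)) := by rw [LinearMap.ker_pi]
    _ ≤ C * (ε / (C + 1)) := (hdist h).trans (by gcongr)
    _ < ε := by
      rw [mul_div_assoc', div_lt_iff₀ (by positivity)]
      linarith
end

section
/- Let c be the real Banach space of convergent sequences with the sup norm, and let X = {(x, y, z) ∈ c ⊕_∞ c ⊕_∞ c : lim x + lim y + lim z = 0}. Then the numerical index of X equals 1, i.e., n(X) = 1. -/
open Filter Topology Metric
open scoped ENNReal

set_option maxHeartbeats 1000000
set_option synthInstance.maxHeartbeats 1000000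

/-- The numerical radius of a bounded linear operator `T` on `X`:
`v(T) = sup { |x*(Tx)| : x ∈ S_X, x* ∈ S_{X*}, x*(x) = 1 }`. -/
noncomputable def numRadius (𝕜 : Type*) {X : Type*} [RCLike 𝕜] [NormedAddCommGroup X]
    [NormedSpace 𝕜 X] (T : X →L[𝕜] X) : ℝ :=
  sSup {r : ℝ | ∃ (x : X) (f : X →L[𝕜] 𝕜), ‖x‖ = 1 ∧ ‖f‖ = 1 ∧ f x = 1 ∧ r = ‖f (T x)‖}

/-- The numerical index of `X`: `n(X) = inf { v(T) : T ∈ L(X), ‖T‖ = 1 }`. -/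
noncomputable def numIndex (𝕜 X : Type*) [RCLike 𝕜] [NormedAddCommGroup X]
    [NormedSpace 𝕜 X] : ℝ :=
  sInf {r : ℝ | ∃ T : X →L[𝕜] X, ‖T‖ = 1 ∧ r = numRadius 𝕜 T}

/-- The ambient space of `c ⊕_∞ c ⊕_∞ c`: triples of bounded real sequences with the
`ℓ_∞`-sum of the sup norms, `‖(x,y,z)‖ = max (‖x‖, ‖y‖, ‖z‖)`. -/
noncomputable abbrev BddSeqTriple : Type :=
  (lp (fun _ : ℕ => ℝ) ∞) × (lp (fun _ : ℕ => ℝ) ∞) × (lp (fun _ : ℕ => ℝ) ∞)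

/-- The space `X = {(x,y,z) ∈ c ⊕_∞ c ⊕_∞ c : lim x + lim y + lim z = 0}`: the subspace of
triples of *convergent* sequences whose limits add up to `0`, inside the sup-normed space of
triples of bounded sequences (so it carries exactly the norm of `c ⊕_∞ c ⊕_∞ c`). -/
noncomputable def limSumZeroSubspace : Submodule ℝ BddSeqTriple where
  carrier := {p | ∃ a b c : ℝ, Filter.Tendsto (⇑p.1) Filter.atTop (nhds a) ∧
    Filter.Tendsto (⇑p.2.1) Filter.atTop (nhds b) ∧
    Filter.Tendsto (⇑p.2.2) Filter.atTop (nhds c) ∧ a + b + c = 0}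
  add_mem' := by
    rintro p q ⟨a, b, c, ha, hb, hc, habc⟩ ⟨a', b', c', ha', hb', hc', habc'⟩
    refine ⟨a + a', b + b', c + c', ?_, ?_, ?_, by linarith⟩
    · first | exact ha.add ha' | (convert ha.add ha' using 1; ext; simp)
    · first | exact hb.add hb' | (convert hb.add hb' using 1; ext; simp)
    · first | exact hc.add hc' | (convert hc.add hc' using 1; ext; simp)
  zero_mem' := ⟨0, 0, 0,
    by simp only [Prod.fst_zero, lp.coeFn_zero]; exact tendsto_const_nhds,
    by simp only [Prod.snd_zero, Prod.fst_zero, lp.coeFn_zero]; exact tendsto_const_nhds,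
    by simp only [Prod.snd_zero, lp.coeFn_zero]; exact tendsto_const_nhds, by ring⟩
  smul_mem' := by
    rintro r p ⟨a, b, c, ha, hb, hc, habc⟩
    refine ⟨r * a, r * b, r * c, ?_, ?_, ?_, by rw [← mul_add, ← mul_add, habc, mul_zero]⟩
    · simpa [lp.coeFn_smul, Pi.smul_def, smul_eq_mul] using ha.const_mul r
    · simpa [lp.coeFn_smul, Pi.smul_def, smul_eq_mul] using hb.const_mul r
    · simpa [lp.coeFn_smul, Pi.smul_def, smul_eq_mul] using hc.const_mul r


/-!
Fix a `1`-norming family of coordinate functionals `δᵢ` together with vectors `eᵢ` biorthogonal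
to it (for `X` these are the coordinates of the three sequences and the unit vectors, which lie in
`X` because their limits vanish). For `‖u‖ ≤ 1` and an index `k`, the vectors
`x₁ = u + (1 - δₖ u) eₖ` and `x₂ = -u + (1 + δₖ u) eₖ` have norm one and are normed by `δₖ`, and
`u = a x₁ - b x₂` with `a, b = (1 ± δₖ u)/2` a pair of convex weights. Hence
`|δₖ (T u)| ≤ a |δₖ (T x₁)| + b |δₖ (T x₂)| ≤ v(T)`, and taking the supremum over `k` and `u`
gives `‖T‖ ≤ v(T)`.
-/

section NumericalRadius

variable {𝕜 E : Type*} [RCLike 𝕜] [NormedAddCommGroup E] [NormedSpace 𝕜 E]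

lemma numRadius_nonneg (T : E →L[𝕜] E) : 0 ≤ numRadius 𝕜 T :=
  Real.sSup_nonneg fun _ ⟨_, _, _, _, _, hr⟩ => hr ▸ norm_nonneg _

lemma norm_apply_le_numRadius (T : E →L[𝕜] E) {x : E} {f : E →L[𝕜] 𝕜} (hx : ‖x‖ = 1)
    (hf : ‖f‖ = 1) (hfx : f x = 1) : ‖f (T x)‖ ≤ numRadius 𝕜 T := by
  refine le_csSup ⟨‖T‖, ?_⟩ ⟨x, f, hx, hf, hfx, rfl⟩
  rintro _ ⟨y, g, hy, hg, -, rfl⟩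
  simpa [hy, hg] using g.le_opNorm_of_le (T.le_opNorm y)

lemma numRadius_id [Nontrivial E] : numRadius 𝕜 (ContinuousLinearMap.id 𝕜 E) = 1 := by
  obtain ⟨y, hy⟩ := exists_ne (0 : E)
  set x : E := (‖y‖⁻¹ : 𝕜) • y
  have hx : ‖x‖ = 1 := norm_smul_inv_norm hy
  obtain ⟨f, hf, hfx⟩ := exists_dual_vector 𝕜 x (by simp [hx])
  have hset : {r : ℝ | ∃ (x : E) (f : E →L[𝕜] 𝕜), ‖x‖ = 1 ∧ ‖f‖ = 1 ∧ f x = 1 ∧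
      r = ‖f (ContinuousLinearMap.id 𝕜 E x)‖} = {1} := by
    refine Set.eq_singleton_iff_unique_mem.mpr ⟨⟨x, f, hx, hf, by simp [hfx, hx], ?_⟩, ?_⟩
    · simp [hfx, hx]
    · rintro _ ⟨z, g, -, -, hgz, rfl⟩
      simp [hgz]
  rw [numRadius, hset, csSup_singleton]

lemma numIndex_eq_one_of_opNorm_le_numRadius [Nontrivial E]
    (h : ∀ T : E →L[𝕜] E, ‖T‖ ≤ numRadius 𝕜 T) : numIndex 𝕜 E = 1 := by
  have hid : (1 : ℝ) ∈ {r | ∃ T : E →L[𝕜] E, ‖T‖ = 1 ∧ r = numRadius 𝕜 T} :=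
    ⟨ContinuousLinearMap.id 𝕜 E, ContinuousLinearMap.norm_id, numRadius_id.symm⟩
  have hlower : ∀ r ∈ {r | ∃ T : E →L[𝕜] E, ‖T‖ = 1 ∧ r = numRadius 𝕜 T}, 1 ≤ r := by
    rintro _ ⟨T, hT, rfl⟩
    exact hT ▸ h T
  exact le_antisymm (csInf_le ⟨1, hlower⟩ hid) (le_csInf ⟨1, hid⟩ hlower)

end NumericalRadius

section NormingFamily

variable {𝕜 ι κ E F : Type*} [NormedField 𝕜] [NormedAddCommGroup E] [NormedSpace 𝕜 E]
  [NormedAddCommGroup F] [NormedSpace 𝕜 F]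

structure IsNormingFamily (δ : ι → E →L[𝕜] 𝕜) : Prop where
  norm_apply_le : ∀ i x, ‖δ i x‖ ≤ ‖x‖
  exists_lt_norm_apply : ∀ x, ∀ c < ‖x‖, ∃ i, c < ‖δ i x‖

structure IsBiorthogonal (δ : ι → E →L[𝕜] 𝕜) (e : ι → E) : Prop where
  apply_self : ∀ i, δ i (e i) = 1
  apply_of_ne : ∀ ⦃i j⦄, i ≠ j → δ i (e j) = 0

namespace IsNormingFamily

variable {δ : ι → E →L[𝕜] 𝕜}

lemma norm_le_of_forall (hδ : IsNormingFamily δ) {x : E} {C : ℝ} (h : ∀ i, ‖δ i x‖ ≤ C) :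
    ‖x‖ ≤ C :=
  le_of_not_gt fun hC => let ⟨i, hi⟩ := hδ.exists_lt_norm_apply x C hC; (h i).not_gt hi

lemma prod (hδ : IsNormingFamily δ) {δ' : κ → F →L[𝕜] 𝕜} (hδ' : IsNormingFamily δ') :
    IsNormingFamily (Sum.elim (fun i => δ i ∘L ContinuousLinearMap.fst 𝕜 E F)
      (fun j => δ' j ∘L ContinuousLinearMap.snd 𝕜 E F)) where
  norm_apply_le := by
    rintro (i | j) ⟨x, y⟩
    · exact (hδ.norm_apply_le i x).trans (le_max_left _ _)
    · exact (hδ'.norm_apply_le j y).trans (le_max_right _ _)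
  exists_lt_norm_apply := by
    rintro ⟨x, y⟩ c hc
    rcases lt_max_iff.mp hc with hx | hy
    · obtain ⟨i, hi⟩ := hδ.exists_lt_norm_apply x c hx
      exact ⟨Sum.inl i, hi⟩
    · obtain ⟨j, hj⟩ := hδ'.exists_lt_norm_apply y c hy
      exact ⟨Sum.inr j, hj⟩

lemma comp_subtypeL (hδ : IsNormingFamily δ) (S : Submodule 𝕜 E) :
    IsNormingFamily fun i => δ i ∘L S.subtypeL where
  norm_apply_le i x := hδ.norm_apply_le i x
  exists_lt_norm_apply x := hδ.exists_lt_norm_apply x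

end IsNormingFamily

namespace IsBiorthogonal

variable {δ : ι → E →L[𝕜] 𝕜} {e : ι → E}

lemma prod (he : IsBiorthogonal δ e) {δ' : κ → F →L[𝕜] 𝕜} {e' : κ → F}
    (he' : IsBiorthogonal δ' e') :
    IsBiorthogonal (Sum.elim (fun i => δ i ∘L ContinuousLinearMap.fst 𝕜 E F)
      (fun j => δ' j ∘L ContinuousLinearMap.snd 𝕜 E F))
      (Sum.elim (fun i => (e i, 0)) (fun j => (0, e' j))) where
  apply_self := by
    rintro (i | j)
    · exact he.apply_self i
    · exact he'.apply_self j
  apply_of_ne := by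
    rintro (i | j) (i' | j') hne
    · exact he.apply_of_ne fun h => hne (h ▸ rfl)
    · exact map_zero (δ i)
    · exact map_zero (δ' j)
    · exact he'.apply_of_ne fun h => hne (h ▸ rfl)

lemma codRestrict (he : IsBiorthogonal δ e) (S : Submodule 𝕜 E) (hS : ∀ i, e i ∈ S) :
    IsBiorthogonal (fun i => δ i ∘L S.subtypeL) (fun i => ⟨e i, hS i⟩) where
  apply_self := he.apply_self
  apply_of_ne := he.apply_of_ne

end IsBiorthogonal

lemma isNormingFamily_lpEvalCLM [Nonempty ι] :
    IsNormingFamily (lp.evalCLM 𝕜 (fun _ : ι => 𝕜) ∞) where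
  norm_apply_le i x := lp.norm_apply_le_norm ENNReal.top_ne_zero x i
  exists_lt_norm_apply x c hc := by
    rw [lp.norm_eq_ciSup] at hc
    exact (lt_ciSup_iff (memℓp_infty_iff.mp (lp.memℓp x))).mp hc

lemma isBiorthogonal_lpEvalCLM_single [DecidableEq ι] :
    IsBiorthogonal (lp.evalCLM 𝕜 (fun _ : ι => 𝕜) ∞) (fun i => lp.single ∞ i 1) where
  apply_self i := lp.single_apply_self ∞ i 1
  apply_of_ne _ _ hne := lp.single_apply_ne ∞ _ 1 hne

end NormingFamily

section UnitVectors

variable {ι E : Type*} [NormedAddCommGroup E] [NormedSpace ℝ E] {δ : ι → E →L[ℝ] ℝ}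
  {e : ι → E}

lemma norm_add_smul_eq_one (hδ : IsNormingFamily δ) (he : IsBiorthogonal δ e) {u : E}
    (hu : ‖u‖ ≤ 1) (k : ι) : ‖u + (1 - δ k u) • e k‖ = 1 := by
  have hk : δ k (u + (1 - δ k u) • e k) = 1 := by simp [he.apply_self]
  refine le_antisymm (hδ.norm_le_of_forall fun i => ?_) ?_
  · rcases eq_or_ne i k with rfl | hik
    · simp [hk]
    · simpa [he.apply_of_ne hik] using (hδ.norm_apply_le i u).trans hu
  · simpa [hk] using hδ.norm_apply_le k (u + (1 - δ k u) • e k)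

lemma norm_apply_le_numRadius_of_isNormingFamily (hδ : IsNormingFamily δ)
    (he : IsBiorthogonal δ e) (T : E →L[ℝ] E) {u : E} (hu : ‖u‖ ≤ 1) (k : ι) :
    ‖δ k (T u)‖ ≤ numRadius ℝ T := by
  set t := δ k u
  set x₁ := u + (1 - t) • e k
  set x₂ := -u + (1 + t) • e k
  have hx₂ : x₂ = -u + (1 - δ k (-u)) • e k := by simp [x₂, t, sub_neg_eq_add]
  have hδk : ‖δ k‖ = 1 := by
    refine le_antisymm (ContinuousLinearMap.opNorm_le_bound _ zero_le_one fun x => ?_) ?_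
    · simpa using hδ.norm_apply_le k x
    · have hek : ‖e k‖ = 1 := by simpa using norm_add_smul_eq_one hδ he (u := 0) (by simp) k
      simpa [he.apply_self, hek] using (δ k).le_opNorm (e k)
  have hv : ∀ x : E, ‖x‖ = 1 → δ k x = 1 → ‖δ k (T x)‖ ≤ numRadius ℝ T :=
    fun x hx hkx => norm_apply_le_numRadius T hx hδk hkx
  have hv₁ := hv x₁ (norm_add_smul_eq_one hδ he hu k) (by simp [x₁, t, he.apply_self])
  have hv₂ := hv x₂ (hx₂ ▸ norm_add_smul_eq_one hδ he (by rwa [norm_neg]) k)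
    (by simp [x₂, t, he.apply_self])
  have ht : |t| ≤ 1 := (hδ.norm_apply_le k u).trans hu
  have ha : 0 ≤ (1 + t) / 2 := by linarith [abs_le.mp ht]
  have hb : 0 ≤ (1 - t) / 2 := by linarith [abs_le.mp ht]
  have hu_eq : u = ((1 + t) / 2) • x₁ - ((1 - t) / 2) • x₂ := by
    simp only [x₁, x₂]
    module
  calc ‖δ k (T u)‖ = ‖(1 + t) / 2 * δ k (T x₁) - (1 - t) / 2 * δ k (T x₂)‖ := by
        conv_lhs => rw [hu_eq]
        simp
    _ ≤ (1 + t) / 2 * ‖δ k (T x₁)‖ + (1 - t) / 2 * ‖δ k (T x₂)‖ := by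
        refine (norm_sub_le _ _).trans_eq ?_
        rw [norm_mul, norm_mul, Real.norm_of_nonneg ha, Real.norm_of_nonneg hb]
    _ ≤ (1 + t) / 2 * numRadius ℝ T + (1 - t) / 2 * numRadius ℝ T := by gcongr
    _ = numRadius ℝ T := by ring

lemma opNorm_le_numRadius_of_isNormingFamily [Nonempty ι] (hδ : IsNormingFamily δ)
    (he : IsBiorthogonal δ e) (T : E →L[ℝ] E) : ‖T‖ ≤ numRadius ℝ T :=
  ContinuousLinearMap.opNorm_le_of_unit_norm (numRadius_nonneg T) fun _ hu =>
    hδ.norm_le_of_forall fun k =>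
      norm_apply_le_numRadius_of_isNormingFamily hδ he T hu.le k

theorem numIndex_eq_one_of_isNormingFamily [Nonempty ι] (hδ : IsNormingFamily δ)
    (he : IsBiorthogonal δ e) : numIndex ℝ E = 1 := by
  obtain ⟨i⟩ := ‹Nonempty ι›
  have : Nontrivial E := ⟨e i, 0, fun h => by simpa [h] using he.apply_self i⟩
  exact numIndex_eq_one_of_opNorm_le_numRadius (opNorm_le_numRadius_of_isNormingFamily hδ he)

end UnitVectors

lemma tendsto_lp_single_atTop_zero {E : Type*} [NormedAddCommGroup E] (p : ℝ≥0∞) (m : ℕ)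
    (a : E) : Tendsto ⇑(lp.single p m a : lp (fun _ : ℕ => E) p) atTop (𝓝 0) :=
  tendsto_const_nhds.congr' <| (eventually_gt_atTop m).mono fun _ hn =>
    (lp.single_apply_ne (E := fun _ : ℕ => E) p m a hn.ne').symm

lemma mem_limSumZeroSubspace_of_tendsto_zero {p : BddSeqTriple}
    (h₁ : Tendsto ⇑p.1 atTop (𝓝 0)) (h₂ : Tendsto ⇑p.2.1 atTop (𝓝 0))
    (h₃ : Tendsto ⇑p.2.2 atTop (𝓝 0)) : p ∈ limSumZeroSubspace :=
  ⟨0, 0, 0, h₁, h₂, h₃, by norm_num⟩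

/-- The space `X = {(x,y,z) ∈ c ⊕_∞ c ⊕_∞ c : lim x + lim y + lim z = 0}` has numerical
index 1. -/
theorem numIndex_limSumZeroSubspace : numIndex ℝ ↥limSumZeroSubspace = 1 := by
  have hδ := isNormingFamily_lpEvalCLM (𝕜 := ℝ) (ι := ℕ)
  have he := isBiorthogonal_lpEvalCLM_single (𝕜 := ℝ) (ι := ℕ)
  have hzero : Tendsto ⇑(0 : lp (fun _ : ℕ => ℝ) ∞) atTop (𝓝 0) := tendsto_const_nhds
  refine numIndex_eq_one_of_isNormingFamily ((hδ.prod (hδ.prod hδ)).comp_subtypeL _)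
    ((he.prod (he.prod he)).codRestrict _ ?_)
  rintro (m | m | m)
  · exact mem_limSumZeroSubspace_of_tendsto_zero (tendsto_lp_single_atTop_zero ∞ m 1) hzero hzero
  · exact mem_limSumZeroSubspace_of_tendsto_zero hzero (tendsto_lp_single_atTop_zero ∞ m 1) hzero
  · exact mem_limSumZeroSubspace_of_tendsto_zero hzero hzero (tendsto_lp_single_atTop_zero ∞ m 1)
end
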